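/- If c and m are integers, c ≠ 12, and the discriminant D = (m − 31c)(m(c − 12)² + c(c² − 24c − 368)) equals d² for some integer d, then ((c−12)((c−12)m − d) − c(15c² − 360c + 2416))·((c−12)((c−12)m + d) − c(15c² − 360c + 2416)) = 16²c²(c−8)²(c−16)², and in particular each factor divides 16²c²(c−8)²(c−16)². -/
import Mathlib

/-- If `c, m` are integers, `c ≠ 12`, and `D = (m - 31c)(m(c-12)² + c(c² - 24c - 368)) = d²`
for an integer `d`, then
`((c-12)((c-12)m - d) - c(15c² - 360c + 2416))·((c-12)((c-12)m + d) - c(15c² - 360c + 2416))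
  = 16²c²(c-8)²(c-16)²`, and in particular each factor divides `16²c²(c-8)²(c-16)²`. -/
theorem factorization_from_square_discriminant (c m d : ℤ) (hc : c ≠ 12)
    (hD : (m - 31 * c) * (m * (c - 12) ^ 2 + c * (c ^ 2 - 24 * c - 368)) = d ^ 2) :
    ((c - 12) * ((c - 12) * m - d) - c * (15 * c ^ 2 - 360 * c + 2416)) *
        ((c - 12) * ((c - 12) * m + d) - c * (15 * c ^ 2 - 360 * c + 2416))
      = 16 ^ 2 * c ^ 2 * (c - 8) ^ 2 * (c - 16) ^ 2 ∧
    ((c - 12) * ((c - 12) * m - d) - c * (15 * c ^ 2 - 360 * c + 2416))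
        ∣ 16 ^ 2 * c ^ 2 * (c - 8) ^ 2 * (c - 16) ^ 2 ∧
    ((c - 12) * ((c - 12) * m + d) - c * (15 * c ^ 2 - 360 * c + 2416))
        ∣ 16 ^ 2 * c ^ 2 * (c - 8) ^ 2 * (c - 16) ^ 2 := by
  have h : ((c - 12) * ((c - 12) * m - d) - c * (15 * c ^ 2 - 360 * c + 2416)) *
        ((c - 12) * ((c - 12) * m + d) - c * (15 * c ^ 2 - 360 * c + 2416))
      = 16 ^ 2 * c ^ 2 * (c - 8) ^ 2 * (c - 16) ^ 2 := by
    linear_combination ((c - 12) ^ 2) * hD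
  have h2 : 16 ^ 2 * c ^ 2 * (c - 8) ^ 2 * (c - 16) ^ 2
      = ((c - 12) * ((c - 12) * m + d) - c * (15 * c ^ 2 - 360 * c + 2416)) *
        ((c - 12) * ((c - 12) * m - d) - c * (15 * c ^ 2 - 360 * c + 2416)) := by
    rw [← h]; ring
  exact ⟨h, ⟨_, h.symm⟩, ⟨_, h2⟩⟩
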